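/- arXiv:1105.6206 — 2 statements merged into one kernel-verified Lean document; each statement's English description precedes it below -/
import Mathlib

section
/- Let S : K' → K be a 2-functor between 2-categories and u : C → SR a morphism in K. Then the vertical identity square i^v_u in the double category H(K) (with K' viewed via H(K')) is a horizontally universal square from the vertical identity 1^v_C to the induced double functor H(S) if and only if for every object D of K' the functor K'(R,D) → K(C,SD), f' ↦ Sf' ∘ u, is an isomorphism of categories (i.e., u is 2-universal). -/
set_option linter.unusedVariables false

/-! Core definitions: strict 2-categories and strict double categories. -/

universe u v w x u' v' w' x' u'' v'' w'' x''

/-- A (strict) 2-category, given by explicit data.  The 1-dimensional category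
laws are included as propositional fields; the 2-dimensional laws are collected
in `TwoCat.Laws`. -/
structure TwoCat where
  Obj : Type u
  Hom : Obj → Obj → Type v
  Cell : ∀ {a b : Obj}, Hom a b → Hom a b → Type w
  hid : ∀ a, Hom a a
  hcomp : ∀ {a b c}, Hom a b → Hom b c → Hom a c
  hid_comp : ∀ {a b} (f : Hom a b), hcomp (hid a) f = f
  hcomp_id : ∀ {a b} (f : Hom a b), hcomp f (hid b) = f
  hassoc : ∀ {a b c d} (f : Hom a b) (g : Hom b c) (h : Hom c d),
    hcomp (hcomp f g) h = hcomp f (hcomp g h)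
  cid : ∀ {a b} (f : Hom a b), Cell f f
  vcomp : ∀ {a b} {f g h : Hom a b}, Cell f g → Cell g h → Cell f h
  hcomp₂ : ∀ {a b c} {f f' : Hom a b} {g g' : Hom b c},
    Cell f f' → Cell g g' → Cell (hcomp f g) (hcomp f' g')

namespace TwoCat

/-- Transport a 2-cell along equalities of its boundary 1-cells. -/
def recast (K : TwoCat) {a b : K.Obj} {f f' g g' : K.Hom a b}
    (hf : f = f') (hg : g = g') (α : K.Cell f g) : K.Cell f' g' := by
  cases hf; cases hg; exact α

/-- The 2-dimensional laws of a strict 2-category. -/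
structure Laws (K : TwoCat) : Prop where
  vcomp_cid : ∀ {a b} {f g : K.Hom a b} (α : K.Cell f g), K.vcomp α (K.cid g) = α
  cid_vcomp : ∀ {a b} {f g : K.Hom a b} (α : K.Cell f g), K.vcomp (K.cid f) α = α
  vcomp_assoc : ∀ {a b} {f g h i : K.Hom a b} (α : K.Cell f g) (β : K.Cell g h)
    (γ : K.Cell h i), K.vcomp (K.vcomp α β) γ = K.vcomp α (K.vcomp β γ)
  hcomp₂_cid : ∀ {a b c} (f : K.Hom a b) (g : K.Hom b c),
    K.hcomp₂ (K.cid f) (K.cid g) = K.cid (K.hcomp f g)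
  interchange : ∀ {a b c} {f f' f'' : K.Hom a b} {g g' g'' : K.Hom b c}
    (α : K.Cell f f') (α' : K.Cell f' f'') (β : K.Cell g g') (β' : K.Cell g' g''),
    K.hcomp₂ (K.vcomp α α') (K.vcomp β β') = K.vcomp (K.hcomp₂ α β) (K.hcomp₂ α' β')
  hcomp₂_assoc : ∀ {a b c d} {f f' : K.Hom a b} {g g' : K.Hom b c} {h h' : K.Hom c d}
    (α : K.Cell f f') (β : K.Cell g g') (γ : K.Cell h h'),
    HEq (K.hcomp₂ (K.hcomp₂ α β) γ) (K.hcomp₂ α (K.hcomp₂ β γ))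
  id_hcomp₂ : ∀ {a b} {f f' : K.Hom a b} (α : K.Cell f f'),
    HEq (K.hcomp₂ (K.cid (K.hid a)) α) α
  hcomp₂_id : ∀ {a b} {f f' : K.Hom a b} (α : K.Cell f f'),
    HEq (K.hcomp₂ α (K.cid (K.hid b))) α

/-- The same 2-category with 2-cells reversed. -/
def co (K : TwoCat) : TwoCat where
  Obj := K.Obj
  Hom := K.Hom
  Cell f g := K.Cell g f
  hid := K.hid
  hcomp := K.hcomp
  hid_comp := K.hid_comp
  hcomp_id := K.hcomp_id
  hassoc := K.hassoc
  cid := K.cid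
  vcomp α β := K.vcomp β α
  hcomp₂ α β := K.hcomp₂ α β

end TwoCat

/-- A (strict) double category, given by explicit data.  The 1-dimensional
category laws for horizontal and vertical morphisms are included; the
square-level laws are collected in `DoubleCat.Laws`. -/
structure DoubleCat where
  Obj : Type u
  Hor : Obj → Obj → Type v
  Ver : Obj → Obj → Type w
  Sq : ∀ {a b c d : Obj}, Hor a b → Ver a c → Ver b d → Hor c d → Type x
  hId : ∀ a, Hor a a
  hComp : ∀ {a b c}, Hor a b → Hor b c → Hor a c
  vId : ∀ a, Ver a a
  vComp : ∀ {a b c}, Ver a b → Ver b c → Ver a c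
  hId_comp : ∀ {a b} (f : Hor a b), hComp (hId a) f = f
  hComp_id : ∀ {a b} (f : Hor a b), hComp f (hId b) = f
  hAssoc : ∀ {a b c d} (f : Hor a b) (g : Hor b c) (h : Hor c d),
    hComp (hComp f g) h = hComp f (hComp g h)
  vId_comp : ∀ {a b} (j : Ver a b), vComp (vId a) j = j
  vComp_id : ∀ {a b} (j : Ver a b), vComp j (vId b) = j
  vAssoc : ∀ {a b c d} (j : Ver a b) (k : Ver b c) (l : Ver c d),
    vComp (vComp j k) l = vComp j (vComp k l)
  idSqV : ∀ {a b} (f : Hor a b), Sq f (vId a) (vId b) f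
  idSqH : ∀ {a b} (j : Ver a b), Sq (hId a) j j (hId b)
  hCompSq : ∀ {a b c a' b' c'} {f : Hor a b} {g : Hor b c} {j : Ver a a'}
    {k : Ver b b'} {l : Ver c c'} {f' : Hor a' b'} {g' : Hor b' c'},
    Sq f j k f' → Sq g k l g' → Sq (hComp f g) j l (hComp f' g')
  vCompSq : ∀ {a b c d e e'} {f : Hor a b} {j : Ver a c} {k : Ver b d}
    {g : Hor c d} {j' : Ver c e} {k' : Ver d e'} {h : Hor e e'},
    Sq f j k g → Sq g j' k' h → Sq f (vComp j j') (vComp k k') h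

namespace DoubleCat

/-- Transport a square along equalities of its four boundaries. -/
def recast (D : DoubleCat) {a b c d : D.Obj} {f f' : D.Hor a b} {j j' : D.Ver a c}
    {k k' : D.Ver b d} {g g' : D.Hor c d} (hf : f = f') (hj : j = j') (hk : k = k')
    (hg : g = g') (α : D.Sq f j k g) : D.Sq f' j' k' g' := by
  cases hf; cases hj; cases hk; cases hg; exact α

/-- The square-level laws of a strict double category. -/
structure Laws (D : DoubleCat) : Prop where
  hCompSq_assoc : ∀ {a₁ a₂ a₃ a₄ b₁ b₂ b₃ b₄} {f₁ : D.Hor a₁ a₂} {f₂ : D.Hor a₂ a₃}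
    {f₃ : D.Hor a₃ a₄} {j₁ : D.Ver a₁ b₁} {j₂ : D.Ver a₂ b₂} {j₃ : D.Ver a₃ b₃}
    {j₄ : D.Ver a₄ b₄} {g₁ : D.Hor b₁ b₂} {g₂ : D.Hor b₂ b₃} {g₃ : D.Hor b₃ b₄}
    (α : D.Sq f₁ j₁ j₂ g₁) (β : D.Sq f₂ j₂ j₃ g₂) (γ : D.Sq f₃ j₃ j₄ g₃),
    HEq (D.hCompSq (D.hCompSq α β) γ) (D.hCompSq α (D.hCompSq β γ))
  idSqH_hComp : ∀ {a b c d} {f : D.Hor a b} {j : D.Ver a c} {k : D.Ver b d}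
    {g : D.Hor c d} (α : D.Sq f j k g), HEq (D.hCompSq (D.idSqH j) α) α
  hComp_idSqH : ∀ {a b c d} {f : D.Hor a b} {j : D.Ver a c} {k : D.Ver b d}
    {g : D.Hor c d} (α : D.Sq f j k g), HEq (D.hCompSq α (D.idSqH k)) α
  vCompSq_assoc : ∀ {a₁ b₁ a₂ b₂ a₃ b₃ a₄ b₄} {f₁ : D.Hor a₁ b₁} {f₂ : D.Hor a₂ b₂}
    {f₃ : D.Hor a₃ b₃} {f₄ : D.Hor a₄ b₄} {j₁ : D.Ver a₁ a₂} {j₂ : D.Ver a₂ a₃}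
    {j₃ : D.Ver a₃ a₄} {k₁ : D.Ver b₁ b₂} {k₂ : D.Ver b₂ b₃} {k₃ : D.Ver b₃ b₄}
    (α : D.Sq f₁ j₁ k₁ f₂) (β : D.Sq f₂ j₂ k₂ f₃) (γ : D.Sq f₃ j₃ k₃ f₄),
    HEq (D.vCompSq (D.vCompSq α β) γ) (D.vCompSq α (D.vCompSq β γ))
  idSqV_vComp : ∀ {a b c d} {f : D.Hor a b} {j : D.Ver a c} {k : D.Ver b d}
    {g : D.Hor c d} (α : D.Sq f j k g), HEq (D.vCompSq (D.idSqV f) α) α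
  vComp_idSqV : ∀ {a b c d} {f : D.Hor a b} {j : D.Ver a c} {k : D.Ver b d}
    {g : D.Hor c d} (α : D.Sq f j k g), HEq (D.vCompSq α (D.idSqV g)) α
  interchange : ∀ {a₁ a₂ a₃ b₁ b₂ b₃ c₁ c₂ c₃} {f₁ : D.Hor a₁ a₂} {f₂ : D.Hor a₂ a₃}
    {g₁ : D.Hor b₁ b₂} {g₂ : D.Hor b₂ b₃} {h₁ : D.Hor c₁ c₂} {h₂ : D.Hor c₂ c₃}
    {j₁ : D.Ver a₁ b₁} {j₂ : D.Ver a₂ b₂} {j₃ : D.Ver a₃ b₃}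
    {k₁ : D.Ver b₁ c₁} {k₂ : D.Ver b₂ c₂} {k₃ : D.Ver b₃ c₃}
    (α : D.Sq f₁ j₁ j₂ g₁) (β : D.Sq f₂ j₂ j₃ g₂)
    (α' : D.Sq g₁ k₁ k₂ h₁) (β' : D.Sq g₂ k₂ k₃ h₂),
    D.hCompSq (D.vCompSq α α') (D.vCompSq β β')
      = D.vCompSq (D.hCompSq α β) (D.hCompSq α' β')
  idSqH_vComp : ∀ {a b c} (j : D.Ver a b) (j' : D.Ver b c),
    D.vCompSq (D.idSqH j) (D.idSqH j') = D.idSqH (D.vComp j j')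
  idSqV_hComp : ∀ {a b c} (f : D.Hor a b) (g : D.Hor b c),
    D.hCompSq (D.idSqV f) (D.idSqV g) = D.idSqV (D.hComp f g)

/-- The horizontal 2-category of a double category. -/
def H (D : DoubleCat) : TwoCat where
  Obj := D.Obj
  Hom := D.Hor
  Cell f g := D.Sq f (D.vId _) (D.vId _) g
  hid := D.hId
  hcomp := D.hComp
  hid_comp := D.hId_comp
  hcomp_id := D.hComp_id
  hassoc := D.hAssoc
  cid := D.idSqV
  vcomp α β := D.recast rfl (D.vId_comp _) (D.vId_comp _) rfl (D.vCompSq α β)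
  hcomp₂ := D.hCompSq

/-- The vertical 2-category of a double category. -/
def V (D : DoubleCat) : TwoCat where
  Obj := D.Obj
  Hom := D.Ver
  Cell j k := D.Sq (D.hId _) j k (D.hId _)
  hid := D.vId
  hcomp := D.vComp
  hid_comp := D.vId_comp
  hcomp_id := D.vComp_id
  hassoc := D.vAssoc
  cid := D.idSqH
  vcomp α β := D.recast (D.hId_comp _) rfl rfl (D.hId_comp _) (D.hCompSq α β)
  hcomp₂ := D.vCompSq

end DoubleCat
namespace TwoCat

/-- The double category of direct quintets of a 2-category. -/
def Quintet (K : TwoCat) : DoubleCat where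
  Obj := K.Obj
  Hor := K.Hom
  Ver := K.Hom
  Sq f j k g := K.Cell (K.hcomp f k) (K.hcomp j g)
  hId := K.hid
  hComp := K.hcomp
  vId := K.hid
  vComp := K.hcomp
  hId_comp := K.hid_comp
  hComp_id := K.hcomp_id
  hAssoc := K.hassoc
  vId_comp := K.hid_comp
  vComp_id := K.hcomp_id
  vAssoc := K.hassoc
  idSqV f := K.recast (K.hcomp_id f).symm (K.hid_comp f).symm (K.cid f)
  idSqH j := K.recast (K.hid_comp j).symm (K.hcomp_id j).symm (K.cid j)
  hCompSq {a b c a' b' c'} {f g j k l f' g'} α β :=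
    K.recast (K.hassoc f g l).symm (K.hassoc j f' g')
      (K.vcomp (K.hcomp₂ (K.cid f) β)
        (K.recast (K.hassoc f k g') rfl (K.hcomp₂ α (K.cid g'))))
  vCompSq {a b c d e e'} {f j k g j' k' h} α β :=
    K.recast rfl (K.hassoc j j' h).symm
      (K.vcomp (K.recast (K.hassoc f k k') (K.hassoc j g k') (K.hcomp₂ α (K.cid k')))
        (K.hcomp₂ (K.cid j) β))

/-- The double category of inverse quintets of a 2-category. -/
def InvQuintet (K : TwoCat) : DoubleCat where
  Obj := K.Obj
  Hor := K.Hom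
  Ver a b := K.Hom b a
  Sq {a b c d} f j k g := K.Cell (K.hcomp j f) (K.hcomp g k)
  hId := K.hid
  hComp := K.hcomp
  vId := K.hid
  vComp j k := K.hcomp k j
  hId_comp := K.hid_comp
  hComp_id := K.hcomp_id
  hAssoc := K.hassoc
  vId_comp j := K.hcomp_id j
  vComp_id j := K.hid_comp j
  vAssoc j k l := (K.hassoc l k j).symm
  idSqV f := K.recast (K.hid_comp f).symm (K.hcomp_id f).symm (K.cid f)
  idSqH j := K.recast (K.hcomp_id j).symm (K.hid_comp j).symm (K.cid j)
  hCompSq {a b c a' b' c'} {f g j k l f' g'} α β :=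
    K.recast rfl (K.hassoc f' g' l).symm
      (K.vcomp (K.recast (K.hassoc j f g) (K.hassoc f' k g) (K.hcomp₂ α (K.cid g)))
        (K.hcomp₂ (K.cid f') β))
  vCompSq {a b c d e e'} {f j k g j' k' h} α β :=
    K.recast (K.hassoc j' j f).symm (K.hassoc h k' k)
      (K.vcomp (K.hcomp₂ (K.cid j') α)
        (K.recast (K.hassoc j' g k) rfl (K.hcomp₂ β (K.cid k))))

end TwoCat

/-- A (strict) double functor: the data.  The strict preservation laws are
collected in `DoubleFunctor.Laws`. -/
structure DoubleFunctor (C : DoubleCat) (D : DoubleCat) where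
  obj : C.Obj → D.Obj
  hmap : ∀ {a b}, C.Hor a b → D.Hor (obj a) (obj b)
  vmap : ∀ {a b}, C.Ver a b → D.Ver (obj a) (obj b)
  smap : ∀ {a b c d} {f : C.Hor a b} {j : C.Ver a c} {k : C.Ver b d}
    {g : C.Hor c d}, C.Sq f j k g → D.Sq (hmap f) (vmap j) (vmap k) (hmap g)

namespace DoubleFunctor

variable {C D E : DoubleCat}

/-- A double functor strictly preserves identities and compositions. -/
structure Laws (F : DoubleFunctor C D) : Prop where
  hmap_id : ∀ a, F.hmap (C.hId a) = D.hId (F.obj a)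
  hmap_comp : ∀ {a b c} (f : C.Hor a b) (g : C.Hor b c),
    F.hmap (C.hComp f g) = D.hComp (F.hmap f) (F.hmap g)
  vmap_id : ∀ a, F.vmap (C.vId a) = D.vId (F.obj a)
  vmap_comp : ∀ {a b c} (j : C.Ver a b) (k : C.Ver b c),
    F.vmap (C.vComp j k) = D.vComp (F.vmap j) (F.vmap k)
  smap_idSqV : ∀ {a b} (f : C.Hor a b), HEq (F.smap (C.idSqV f)) (D.idSqV (F.hmap f))
  smap_idSqH : ∀ {a b} (j : C.Ver a b), HEq (F.smap (C.idSqH j)) (D.idSqH (F.vmap j))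
  smap_hComp : ∀ {a b c a' b' c'} {f : C.Hor a b} {g : C.Hor b c} {j : C.Ver a a'}
    {k : C.Ver b b'} {l : C.Ver c c'} {f' : C.Hor a' b'} {g' : C.Hor b' c'}
    (α : C.Sq f j k f') (β : C.Sq g k l g'),
    HEq (F.smap (C.hCompSq α β)) (D.hCompSq (F.smap α) (F.smap β))
  smap_vComp : ∀ {a b c d e e'} {f : C.Hor a b} {j : C.Ver a c} {k : C.Ver b d}
    {g : C.Hor c d} {j' : C.Ver c e} {k' : C.Ver d e'} {h : C.Hor e e'}
    (α : C.Sq f j k g) (β : C.Sq g j' k' h),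
    HEq (F.smap (C.vCompSq α β)) (D.vCompSq (F.smap α) (F.smap β))

/-- The identity double functor. -/
def idF (C : DoubleCat) : DoubleFunctor C C where
  obj a := a
  hmap f := f
  vmap j := j
  smap s := s

/-- Composition of double functors (diagrammatic order). -/
def comp (F : DoubleFunctor C D) (G : DoubleFunctor D E) : DoubleFunctor C E where
  obj a := G.obj (F.obj a)
  hmap f := G.hmap (F.hmap f)
  vmap j := G.vmap (F.vmap j)
  smap s := G.smap (F.smap s)

end DoubleFunctor

/-- A horizontal natural transformation between double functors (data). -/
structure HorNatTrans {C D : DoubleCat} (F G : DoubleFunctor C D) where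
  app : ∀ a, D.Hor (F.obj a) (G.obj a)
  sq : ∀ {a b} (j : C.Ver a b), D.Sq (app a) (F.vmap j) (G.vmap j) (app b)

namespace HorNatTrans

variable {C D : DoubleCat} {F G : DoubleFunctor C D}

structure Laws (θ : HorNatTrans F G) : Prop where
  sq_id : ∀ a, HEq (θ.sq (C.vId a)) (D.idSqV (θ.app a))
  sq_comp : ∀ {a b c} (j : C.Ver a b) (j' : C.Ver b c),
    HEq (θ.sq (C.vComp j j')) (D.vCompSq (θ.sq j) (θ.sq j'))
  natural_hor : ∀ {a b} (f : C.Hor a b),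
    D.hComp (F.hmap f) (θ.app b) = D.hComp (θ.app a) (G.hmap f)
  natural : ∀ {a b c d} {f : C.Hor a b} {j : C.Ver a c} {k : C.Ver b d}
    {g : C.Hor c d} (α : C.Sq f j k g),
    HEq (D.hCompSq (F.smap α) (θ.sq k)) (D.hCompSq (θ.sq j) (G.smap α))

end HorNatTrans

/-- A vertical natural transformation between double functors (data plus laws). -/
structure VertNatTrans {C D : DoubleCat} (F G : DoubleFunctor C D) where
  app : ∀ a, D.Ver (F.obj a) (G.obj a)
  sq : ∀ {a b} (f : C.Hor a b), D.Sq (F.hmap f) (app a) (app b) (G.hmap f)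

namespace VertNatTrans

variable {C D : DoubleCat} {F G : DoubleFunctor C D}

structure Laws (θ : VertNatTrans F G) : Prop where
  sq_id : ∀ a, HEq (θ.sq (C.hId a)) (D.idSqH (θ.app a))
  sq_comp : ∀ {a b c} (f : C.Hor a b) (g : C.Hor b c),
    HEq (θ.sq (C.hComp f g)) (D.hCompSq (θ.sq f) (θ.sq g))
  natural_ver : ∀ {a b} (j : C.Ver a b),
    D.vComp (F.vmap j) (θ.app b) = D.vComp (θ.app a) (G.vmap j)
  natural : ∀ {a b c d} {f : C.Hor a b} {j : C.Ver a c} {k : C.Ver b d}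
    {g : C.Hor c d} (α : C.Sq f j k g),
    HEq (D.vCompSq (F.smap α) (θ.sq g)) (D.vCompSq (θ.sq f) (G.smap α))

end VertNatTrans

/-- A horizontal double adjunction `F ⊣ G` : an internal adjunction in the
2-category of double categories, double functors and horizontal natural
transformations, presented by unit and counit and triangle identities. -/
structure HorDoubleAdj {X A : DoubleCat} (F : DoubleFunctor X A) (G : DoubleFunctor A X) where
  F_laws : F.Laws
  G_laws : G.Laws
  unit : HorNatTrans (DoubleFunctor.idF X) (F.comp G)
  counit : HorNatTrans (G.comp F) (DoubleFunctor.idF A)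
  unit_laws : unit.Laws
  counit_laws : counit.Laws
  triangleF_obj : ∀ a, A.hComp (F.hmap (unit.app a)) (counit.app (F.obj a)) = A.hId (F.obj a)
  triangleF_sq : ∀ {a b} (j : X.Ver a b),
    HEq (A.hCompSq (F.smap (unit.sq j)) (counit.sq (F.vmap j))) (A.idSqH (F.vmap j))
  triangleG_obj : ∀ a, X.hComp (unit.app (G.obj a)) (G.hmap (counit.app a)) = X.hId (G.obj a)
  triangleG_sq : ∀ {a b} (k : A.Ver a b),
    HEq (X.hCompSq (unit.sq (G.vmap k)) (G.smap (counit.sq k))) (X.idSqH (G.vmap k))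

/-- A vertical double adjunction `F ⊣ G` (F vertical left double adjoint). -/
structure VertDoubleAdj {X A : DoubleCat} (F : DoubleFunctor X A) (G : DoubleFunctor A X) where
  F_laws : F.Laws
  G_laws : G.Laws
  unit : VertNatTrans (DoubleFunctor.idF X) (F.comp G)
  counit : VertNatTrans (G.comp F) (DoubleFunctor.idF A)
  unit_laws : unit.Laws
  counit_laws : counit.Laws
  triangleF_obj : ∀ a, A.vComp (F.vmap (unit.app a)) (counit.app (F.obj a)) = A.vId (F.obj a)
  triangleF_sq : ∀ {a b} (f : X.Hor a b),
    HEq (A.vCompSq (F.smap (unit.sq f)) (counit.sq (F.hmap f))) (A.idSqV (F.hmap f))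
  triangleG_obj : ∀ a, X.vComp (unit.app (G.obj a)) (G.vmap (counit.app a)) = X.vId (G.obj a)
  triangleG_sq : ∀ {a b} (g : A.Hor a b),
    HEq (X.vCompSq (unit.sq (G.hmap g)) (G.smap (counit.sq g))) (X.idSqV (G.hmap g))

namespace DoubleCat

variable {D : DoubleCat}

/-- The set of squares with fixed left vertical boundary `j` and fixed right
vertical boundary `k` (with varying top and bottom). -/
def SqSet (D : DoubleCat) {a b c d : D.Obj} (j : D.Ver a c) (k : D.Ver b d) :
    Type _ :=
  Σ (f : D.Hor a b) (g : D.Hor c d), D.Sq f j k g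

/-- Horizontal composition of elements of `SqSet`. -/
def SqSet.hcomp {a b c a' b' c' : D.Obj} {j : D.Ver a a'} {k : D.Ver b b'}
    {l : D.Ver c c'} (x : D.SqSet j k) (y : D.SqSet k l) : D.SqSet j l :=
  ⟨D.hComp x.1 y.1, D.hComp x.2.1 y.2.1, D.hCompSq x.2.2 y.2.2⟩

/-- Vertical composition of elements of `SqSet` (given that the bottom of the
first is the top of the second). -/
def SqSet.vcomp {a b c d e e' : D.Obj} {j : D.Ver a c} {k : D.Ver b d}
    {j' : D.Ver c e} {k' : D.Ver d e'} (x : D.SqSet j k) (y : D.SqSet j' k')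
    (h : x.2.1 = y.1) : D.SqSet (D.vComp j j') (D.vComp k k') :=
  ⟨x.1, y.2.1, D.vCompSq x.2.2 (D.recast h.symm rfl rfl rfl y.2.2)⟩

end DoubleCat

namespace DoubleFunctor

variable {C D : DoubleCat}

/-- The image of a `SqSet` element under a double functor. -/
def mapSqSet (F : DoubleFunctor C D) {a b c d : C.Obj} {j : C.Ver a c}
    {k : C.Ver b d} (x : C.SqSet j k) : D.SqSet (F.vmap j) (F.vmap k) :=
  ⟨F.hmap x.1, F.hmap x.2.1, F.smap x.2.2⟩

/-- Post-composition with a square `μ` from a vertical morphism `j` to `S`. -/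
def inducedMap (S : DoubleFunctor D C) {a a' : C.Obj} {r r' : D.Obj}
    {j : C.Ver a a'} {k : D.Ver r r'} (μ : C.SqSet j (S.vmap k))
    {d d' : D.Obj} (l : D.Ver d d') (x : D.SqSet k l) : C.SqSet j (S.vmap l) :=
  DoubleCat.SqSet.hcomp μ (S.mapSqSet x)

/-- `μ` is a (horizontally) universal square from the vertical morphism `j`
to the double functor `S`. -/
def IsUniversalFrom (S : DoubleFunctor D C) {a a' : C.Obj} {r r' : D.Obj}
    {j : C.Ver a a'} {k : D.Ver r r'} (μ : C.SqSet j (S.vmap k)) : Prop :=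
  ∀ {d d' : D.Obj} (l : D.Ver d d'), Function.Bijective (S.inducedMap μ l)

end DoubleFunctor
namespace TwoCat

/-- Transport a 1-cell along equalities of objects. -/
def castHom (K : TwoCat) {a a' b b' : K.Obj} (h1 : a = a') (h2 : b = b')
    (f : K.Hom a b) : K.Hom a' b' := by
  cases h1; cases h2; exact f

/-- The double category `ℍ K` with horizontal 2-category `K` and only trivial
vertical morphisms. -/
def HDouble (K : TwoCat) : DoubleCat where
  Obj := K.Obj
  Hor := K.Hom
  Ver a b := PLift (a = b)
  Sq {a b c d} f j k g := K.Cell f (K.castHom j.down.symm k.down.symm g)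
  hId := K.hid
  hComp := K.hcomp
  vId a := ⟨rfl⟩
  vComp j k := ⟨j.down.trans k.down⟩
  hId_comp := K.hid_comp
  hComp_id := K.hcomp_id
  hAssoc := K.hassoc
  vId_comp j := rfl
  vComp_id j := rfl
  vAssoc j k l := rfl
  idSqV f := K.cid f
  idSqH j := by
    obtain ⟨hj⟩ := j; cases hj; exact K.cid (K.hid _)
  hCompSq {a b c a' b' c'} {f g j k l f' g'} α β := by
    obtain ⟨hj⟩ := j; obtain ⟨hk⟩ := k; obtain ⟨hl⟩ := l
    cases hj; cases hk; cases hl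
    exact K.vcomp (K.hcomp₂ α (K.cid g)) (K.hcomp₂ (K.cid f') β)
  vCompSq {a b c d e e'} {f j k g j' k' h} α β := by
    obtain ⟨hj⟩ := j; obtain ⟨hk⟩ := k; obtain ⟨hj'⟩ := j'; obtain ⟨hk'⟩ := k'
    cases hj; cases hk; cases hj'; cases hk'
    exact K.vcomp α β

end TwoCat

/-- A 2-functor (data).  The strict preservation laws are collected in
`TwoFunctor.Laws`. -/
structure TwoFunctor (K L : TwoCat) where
  obj : K.Obj → L.Obj
  hmap : ∀ {a b}, K.Hom a b → L.Hom (obj a) (obj b)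
  cmap : ∀ {a b} {f g : K.Hom a b}, K.Cell f g → L.Cell (hmap f) (hmap g)

namespace TwoFunctor

variable {K L M : TwoCat}

structure Laws (F : TwoFunctor K L) : Prop where
  hmap_id : ∀ a, F.hmap (K.hid a) = L.hid (F.obj a)
  hmap_comp : ∀ {a b c} (f : K.Hom a b) (g : K.Hom b c),
    F.hmap (K.hcomp f g) = L.hcomp (F.hmap f) (F.hmap g)
  cmap_cid : ∀ {a b} (f : K.Hom a b), F.cmap (K.cid f) = L.cid (F.hmap f)
  cmap_vcomp : ∀ {a b} {f g h : K.Hom a b} (α : K.Cell f g) (β : K.Cell g h),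
    F.cmap (K.vcomp α β) = L.vcomp (F.cmap α) (F.cmap β)
  cmap_hcomp₂ : ∀ {a b c} {f f' : K.Hom a b} {g g' : K.Hom b c}
    (α : K.Cell f f') (β : K.Cell g g'),
    HEq (F.cmap (K.hcomp₂ α β)) (L.hcomp₂ (F.cmap α) (F.cmap β))

/-- The identity 2-functor. -/
def idF (K : TwoCat) : TwoFunctor K K := ⟨fun a => a, fun f => f, fun α => α⟩

/-- Composition of 2-functors (diagrammatic order). -/
def comp (F : TwoFunctor K L) (G : TwoFunctor L M) : TwoFunctor K M :=
  ⟨fun a => G.obj (F.obj a), fun f => G.hmap (F.hmap f), fun α => G.cmap (F.cmap α)⟩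

end TwoFunctor

/-- The double functor `ℍ S : ℍ K → ℍ L` induced by a 2-functor `S`. -/
def TwoFunctor.HFun {K L : TwoCat} (S : TwoFunctor K L) :
    DoubleFunctor K.HDouble L.HDouble where
  obj := S.obj
  hmap := S.hmap
  vmap j := ⟨congrArg S.obj j.down⟩
  smap {a b c d} {f j k g} α := by
    obtain ⟨hj⟩ := j; obtain ⟨hk⟩ := k
    cases hj; cases hk
    exact S.cmap α

/-! Vertical morphisms of `ℍ K'` are identities, so universality of the identity square says
exactly that whiskering `f' ↦ u ∘ S f'` is bijective on the arrows of each hom-category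
`K'(R, D)`; since whiskering sends identity 2-cells to identity 2-cells, bijectivity on arrows
already gives bijectivity on objects. -/

theorem Function.Bijective.of_arrows_of_map_id {A B : Type*} {X : A → A → Type*}
    {Y : B → B → Type*} {φ : A → B} {F : (Σ a a', X a a') → Σ b b', Y b b'}
    (idX : ∀ a, X a a) (idY : ∀ b, Y b b) (hF_fst : ∀ p, (F p).1 = φ p.1)
    (hF_id : ∀ a, F ⟨a, a, idX a⟩ = ⟨φ a, φ a, idY (φ a)⟩) (hF : Function.Bijective F) :
    Function.Bijective φ := by
  refine ⟨fun a b hab => ?_, fun b => ?_⟩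
  · have hFab : F ⟨a, a, idX a⟩ = F ⟨b, b, idX b⟩ := by rw [hF_id, hF_id, hab]
    exact congrArg Sigma.fst (hF.injective hFab)
  · obtain ⟨p, hp⟩ := hF.surjective ⟨b, b, idY b⟩
    exact ⟨p.1, (hF_fst p).symm.trans (congrArg Sigma.fst hp)⟩

namespace TwoFunctor

variable {K' K : TwoCat}

def whiskerArrows (S : TwoFunctor K' K) {C : K.Obj} {R : K'.Obj} (u : K.Hom C (S.obj R))
    (D : K'.Obj) (p : Σ f' g' : K'.Hom R D, K'.Cell f' g') :
    Σ f g : K.Hom C (S.obj D), K.Cell f g :=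
  ⟨K.hcomp u (S.hmap p.1), K.hcomp u (S.hmap p.2.1), K.hcomp₂ (K.cid u) (S.cmap p.2.2)⟩

theorem whiskerArrows_cid {S : TwoFunctor K' K} (hK : K.Laws) (hS : S.Laws) {C : K.Obj}
    {R D : K'.Obj} (u : K.Hom C (S.obj R)) (f' : K'.Hom R D) :
    S.whiskerArrows u D ⟨f', f', K'.cid f'⟩ =
      ⟨K.hcomp u (S.hmap f'), K.hcomp u (S.hmap f'), K.cid (K.hcomp u (S.hmap f'))⟩ := by
  simp only [whiskerArrows, hS.cmap_cid, hK.hcomp₂_cid]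

/-- Horizontal composition in `ℍ K` is a vertical composite of two whiskerings; against the
identity square the first one is an identity 2-cell. -/
theorem HFun_inducedMap_idSqV (S : TwoFunctor K' K) (hK : K.Laws) {C : K.Obj} {R : K'.Obj}
    (u : K.Hom C (S.obj R)) (D : K'.Obj) :
    S.HFun.inducedMap (j := K.HDouble.vId C) (k := K'.HDouble.vId R)
        ⟨u, u, K.HDouble.idSqV u⟩ (K'.HDouble.vId D) = S.whiskerArrows u D := by
  funext ⟨f', g', α⟩
  change (⟨K.hcomp u (S.hmap f'), K.hcomp u (S.hmap g'),
    K.vcomp (K.hcomp₂ (K.cid u) (K.cid (S.hmap f'))) (K.hcomp₂ (K.cid u) (S.cmap α))⟩ :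
    Σ f g : K.Hom C (S.obj D), K.Cell f g) = _
  rw [hK.hcomp₂_cid, hK.cid_vcomp]
  rfl

end TwoFunctor

theorem identity_square_universal_iff_two_universal_general
    {K' K : TwoCat} (hK : K.Laws)
    (S : TwoFunctor K' K) (hS : S.Laws)
    (C : K.Obj) (R : K'.Obj) (u : K.Hom C (S.obj R))
    (μ : (TwoCat.HDouble K).Sq u ((TwoCat.HDouble K).vId C)
        (S.HFun.vmap ((TwoCat.HDouble K').vId R)) u)
    (hμ : HEq μ ((TwoCat.HDouble K).idSqV u)) :
    S.HFun.IsUniversalFrom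
        (j := (TwoCat.HDouble K).vId C) (k := (TwoCat.HDouble K').vId R)
        ⟨u, u, μ⟩ ↔
      ∀ D : K'.Obj,
        Function.Bijective (fun f' : K'.Hom R D => K.hcomp u (S.hmap f')) ∧
        Function.Bijective
          (fun p : Σ f' g' : K'.Hom R D, K'.Cell f' g' =>
            (⟨K.hcomp u (S.hmap p.1), K.hcomp u (S.hmap p.2.1),
              K.hcomp₂ (K.cid u) (S.cmap p.2.2)⟩ :
              Σ f g : K.Hom C (S.obj D), K.Cell f g)) := by
  obtain rfl : μ = K.cid u := eq_of_heq hμ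
  have key := S.HFun_inducedMap_idSqV hK u
  constructor
  · intro h D
    have hArrows : Function.Bijective (S.whiskerArrows u D) :=
      key D ▸ h (K'.HDouble.vId D)
    exact ⟨hArrows.of_arrows_of_map_id K'.cid K.cid (fun _ => rfl)
      (TwoFunctor.whiskerArrows_cid hK hS u), hArrows⟩
  · rintro h d d' ⟨rfl⟩
    exact (key d).symm ▸ (h d).2

/-- Let `S : K' → K` be a 2-functor and `u : C → SR` a
morphism in `K`.  The vertical identity square `i^v_u` in `ℍ K` is a
horizontally universal square from the vertical identity `1^v_C` to the
induced double functor `ℍ S` if and only if for every object `D` of `K'`,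
whiskering with `u` is an isomorphism of categories
`K'(R,D) ≅ K(C,SD)` (i.e. `u` is 2-universal). -/
theorem identity_square_universal_iff_two_universal
    {K' K : TwoCat} (hK' : K'.Laws) (hK : K.Laws)
    (S : TwoFunctor K' K) (hS : S.Laws)
    (C : K.Obj) (R : K'.Obj) (u : K.Hom C (S.obj R))
    (μ : (TwoCat.HDouble K).Sq u ((TwoCat.HDouble K).vId C)
        (S.HFun.vmap ((TwoCat.HDouble K').vId R)) u)
    (hμ : HEq μ ((TwoCat.HDouble K).idSqV u)) :
    S.HFun.IsUniversalFrom
        (j := (TwoCat.HDouble K).vId C) (k := (TwoCat.HDouble K').vId R)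
        ⟨u, u, μ⟩ ↔
      ∀ D : K'.Obj,
        Function.Bijective (fun f' : K'.Hom R D => K.hcomp u (S.hmap f')) ∧
        Function.Bijective
          (fun p : Σ f' g' : K'.Hom R D, K'.Cell f' g' =>
            (⟨K.hcomp u (S.hmap p.1), K.hcomp u (S.hmap p.2.1),
              K.hcomp₂ (K.cid u) (S.cmap p.2.2)⟩ :
              Σ f g : K.Hom C (S.obj D), K.Cell f g)) :=
  identity_square_universal_iff_two_universal_general hK S hS C R u μ hμ
end

section
/- Let F : X → A and G : A → X be double functors. Then F ⊣ G is a horizontal double adjunction if and only if there exists a horizontal natural transformation η : 1_X ⇒ GF such that for every vertical morphism j of X, the square η_j is horizontally universal from j to G. -/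
set_option linter.unusedVariables false

/-! Core definitions: strict 2-categories and strict double categories. -/

universe u v w x u' v' w' x' u'' v'' w'' x''

/-! If `F ⊣ G`, the map `x ↦ η_j ; G x` is inverted by `y ↦ F y ; ε_l`, by naturality of `η` and `ε`
and the triangle identities. Conversely, universality of `η_{Gk}` produces a unique square `ε_k`
with `η_{Gk} ; G ε_k = 1_{Gk}`. Its horizontal boundaries depend only on the endpoints of `k`,
since a horizontal morphism `h : F c → d` is determined by `η_c ; G h` (universality at the
vertical identity of `c`). Every remaining law of `ε`, and the other triangle identity, is an
equation between squares with source `F j`, so it can be checked after applying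
`x ↦ η_j ; G x`, which is injective; there it follows from the laws of `η` and the triangle
identity for `G`, with Eckmann–Hilton identifying the two identity squares of an object. -/

namespace DoubleCat

variable {D : DoubleCat}

theorem recast_heq {a b c d : D.Obj} {f f' : D.Hor a b} {j j' : D.Ver a c}
    {k k' : D.Ver b d} {g g' : D.Hor c d} (hf : f = f') (hj : j = j') (hk : k = k')
    (hg : g = g') (α : D.Sq f j k g) : HEq (D.recast hf hj hk hg α) α := by
  subst hf hj hk hg; rfl

theorem hCompSq_congr {a b c a' b' c' : D.Obj}
    {f₁ f₂ : D.Hor a b} {g₁ g₂ : D.Hor b c} {j₁ j₂ : D.Ver a a'} {k₁ k₂ : D.Ver b b'}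
    {l₁ l₂ : D.Ver c c'} {f'₁ f'₂ : D.Hor a' b'} {g'₁ g'₂ : D.Hor b' c'}
    {α₁ : D.Sq f₁ j₁ k₁ f'₁} {α₂ : D.Sq f₂ j₂ k₂ f'₂}
    {β₁ : D.Sq g₁ k₁ l₁ g'₁} {β₂ : D.Sq g₂ k₂ l₂ g'₂}
    (hf : f₁ = f₂) (hg : g₁ = g₂) (hj : j₁ = j₂) (hk : k₁ = k₂) (hl : l₁ = l₂)
    (hf' : f'₁ = f'₂) (hg' : g'₁ = g'₂) (hα : HEq α₁ α₂) (hβ : HEq β₁ β₂) :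
    HEq (D.hCompSq α₁ β₁) (D.hCompSq α₂ β₂) := by
  subst hf hg hj hk hl hf' hg' hα hβ; rfl

theorem vCompSq_congr {a b c d e e' : D.Obj}
    {f₁ f₂ : D.Hor a b} {g₁ g₂ : D.Hor c d} {h₁ h₂ : D.Hor e e'}
    {j₁ j₂ : D.Ver a c} {k₁ k₂ : D.Ver b d} {j'₁ j'₂ : D.Ver c e} {k'₁ k'₂ : D.Ver d e'}
    {α₁ : D.Sq f₁ j₁ k₁ g₁} {α₂ : D.Sq f₂ j₂ k₂ g₂}
    {β₁ : D.Sq g₁ j'₁ k'₁ h₁} {β₂ : D.Sq g₂ j'₂ k'₂ h₂}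
    (hf : f₁ = f₂) (hg : g₁ = g₂) (hh : h₁ = h₂) (hj : j₁ = j₂) (hk : k₁ = k₂)
    (hj' : j'₁ = j'₂) (hk' : k'₁ = k'₂) (hα : HEq α₁ α₂) (hβ : HEq β₁ β₂) :
    HEq (D.vCompSq α₁ β₁) (D.vCompSq α₂ β₂) := by
  subst hf hg hh hj hk hj' hk' hα hβ; rfl

/-- Eckmann–Hilton: interchange applied to the two identity squares of `a` in both orders. -/
theorem Laws.idSqH_vId (hD : D.Laws) (a : D.Obj) :
    D.idSqH (D.vId a) = D.idSqV (D.hId a) := by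
  have horizontal : HEq (D.hCompSq (D.vCompSq (D.idSqH (D.vId a)) (D.idSqV (D.hId a)))
      (D.vCompSq (D.idSqV (D.hId a)) (D.idSqH (D.vId a)))) (D.idSqH (D.vId a)) :=
    (hCompSq_congr rfl rfl (D.vId_comp _) (D.vId_comp _) (D.vId_comp _) rfl rfl
      (hD.vComp_idSqV _) (hD.idSqV_vComp _)).trans (hD.idSqH_hComp _)
  have vertical : HEq (D.vCompSq (D.hCompSq (D.idSqH (D.vId a)) (D.idSqV (D.hId a)))
      (D.hCompSq (D.idSqV (D.hId a)) (D.idSqH (D.vId a)))) (D.idSqV (D.hId a)) :=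
    (vCompSq_congr (D.hId_comp _) (D.hId_comp _) (D.hId_comp _) rfl rfl rfl rfl
      (hD.idSqH_hComp _) (hD.hComp_idSqH _)).trans (hD.idSqV_vComp _)
  exact eq_of_heq <| horizontal.symm.trans <| (heq_of_eq (hD.interchange _ _ _ _)).trans vertical

namespace SqSet

variable {a b c d a' b' c' e e' : D.Obj}

theorem ext {j : D.Ver a c} {k : D.Ver b d} :
    ∀ {x y : D.SqSet j k}, x.1 = y.1 → x.2.1 = y.2.1 → HEq x.2.2 y.2.2 → x = y
  | ⟨_, _, _⟩, ⟨_, _, _⟩, rfl, rfl, HEq.rfl => rfl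

def cast {j j' : D.Ver a c} {k k' : D.Ver b d} (hj : j = j') (hk : k = k')
    (x : D.SqSet j k) : D.SqSet j' k' :=
  ⟨x.1, x.2.1, D.recast rfl hj hk rfl x.2.2⟩

theorem snd_snd_heq {j : D.Ver a c} {k : D.Ver b d} {x y : D.SqSet j k} (h : x = y) :
    HEq x.2.2 y.2.2 := by
  subst h; rfl

theorem heq_cast {j j' : D.Ver a c} {k k' : D.Ver b d} (hj : j = j') (hk : k = k')
    (x : D.SqSet j k) : HEq (x.cast hj hk).2.2 x.2.2 :=
  recast_heq rfl hj hk rfl x.2.2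

def idH (j : D.Ver a c) : D.SqSet j j := ⟨D.hId a, D.hId c, D.idSqH j⟩

def idV (f : D.Hor a b) : D.SqSet (D.vId a) (D.vId b) := ⟨f, f, D.idSqV f⟩

theorem cast_cast {j j' j'' : D.Ver a c} {k k' k'' : D.Ver b d} (hj : j = j') (hk : k = k')
    (hj' : j' = j'') (hk' : k' = k'') (x : D.SqSet j k) :
    (x.cast hj hk).cast hj' hk' = x.cast (hj.trans hj') (hk.trans hk') := by
  subst hj hk hj' hk'; rfl

theorem cast_hcomp_cast {j j' : D.Ver a a'} {k k' : D.Ver b b'} {l l' : D.Ver c c'}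
    (hj : j = j') (hk : k = k') (hl : l = l') (x : D.SqSet j k) (y : D.SqSet k l) :
    (x.cast hj hk).hcomp (y.cast hk hl) = (x.hcomp y).cast hj hl := by
  subst hj hk hl; rfl

theorem idH_cast {j j' : D.Ver a c} (h : j = j') : (idH j).cast h h = idH j' := by
  subst h; rfl

theorem vcomp_congr {j : D.Ver a c} {k : D.Ver b d} {j' : D.Ver c e} {k' : D.Ver d e'}
    {x x' : D.SqSet j k} {y y' : D.SqSet j' k'} (hx : x = x') (hy : y = y')
    (h : x.2.1 = y.1) : x.vcomp y h = x'.vcomp y' (hx ▸ hy ▸ h) := by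
  subst hx hy; rfl

theorem hcomp_assoc (hD : D.Laws) {a₁ a₂ a₃ a₄ b₁ b₂ b₃ b₄ : D.Obj}
    {j : D.Ver a₁ b₁} {k : D.Ver a₂ b₂} {l : D.Ver a₃ b₃} {m : D.Ver a₄ b₄}
    (x : D.SqSet j k) (y : D.SqSet k l) (z : D.SqSet l m) :
    (x.hcomp y).hcomp z = x.hcomp (y.hcomp z) :=
  ext (D.hAssoc _ _ _) (D.hAssoc _ _ _) (hD.hCompSq_assoc _ _ _)

theorem idH_hcomp (hD : D.Laws) {j : D.Ver a c} {k : D.Ver b d} (x : D.SqSet j k) :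
    (idH j).hcomp x = x :=
  ext (D.hId_comp _) (D.hId_comp _) (hD.idSqH_hComp _)

theorem hcomp_idH (hD : D.Laws) {j : D.Ver a c} {k : D.Ver b d} (x : D.SqSet j k) :
    x.hcomp (idH k) = x :=
  ext (D.hComp_id _) (D.hComp_id _) (hD.hComp_idSqH _)

theorem idV_hcomp_idV (hD : D.Laws) (f : D.Hor a b) (g : D.Hor b c) :
    (idV f).hcomp (idV g) = idV (D.hComp f g) :=
  ext rfl rfl (heq_of_eq (hD.idSqV_hComp f g))

theorem idH_vId (hD : D.Laws) (a : D.Obj) : idH (D.vId a) = idV (D.hId a) :=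
  ext rfl rfl (heq_of_eq (hD.idSqH_vId a))

theorem idH_vcomp_idH (hD : D.Laws) (j : D.Ver a b) (j' : D.Ver b c) :
    (idH j).vcomp (idH j') rfl = idH (D.vComp j j') :=
  ext rfl rfl (heq_of_eq (hD.idSqH_vComp j j'))

theorem vcomp_hcomp_vcomp (hD : D.Laws) {a₁ a₂ a₃ b₁ b₂ b₃ c₁ c₂ c₃ : D.Obj}
    {j₁ : D.Ver a₁ b₁} {j₂ : D.Ver a₂ b₂} {j₃ : D.Ver a₃ b₃}
    {k₁ : D.Ver b₁ c₁} {k₂ : D.Ver b₂ c₂} {k₃ : D.Ver b₃ c₃}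
    (x : D.SqSet j₁ j₂) (y : D.SqSet j₂ j₃) (x' : D.SqSet k₁ k₂) (y' : D.SqSet k₂ k₃)
    (hx : x.2.1 = x'.1) (hy : y.2.1 = y'.1) :
    (x.vcomp x' hx).hcomp (y.vcomp y' hy) =
      (x.hcomp y).vcomp (x'.hcomp y') (congrArg₂ D.hComp hx hy) := by
  obtain ⟨f₁, g₁, α⟩ := x; obtain ⟨f₂, g₂, β⟩ := y
  obtain ⟨g₁', h₁, α'⟩ := x'; obtain ⟨g₂', h₂, β'⟩ := y'
  obtain rfl : g₁ = g₁' := hx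
  obtain rfl : g₂ = g₂' := hy
  exact ext rfl rfl (heq_of_eq (hD.interchange α β α' β'))

end SqSet

end DoubleCat

namespace DoubleFunctor

open DoubleCat

variable {C D : DoubleCat} {a b c a' b' c' e e' : C.Obj}

theorem mapSqSet_cast (F : DoubleFunctor C D) {j j' : C.Ver a c} {k k' : C.Ver b b'}
    (hj : j = j') (hk : k = k') (x : C.SqSet j k) :
    F.mapSqSet (x.cast hj hk) = (F.mapSqSet x).cast (congrArg F.vmap hj) (congrArg F.vmap hk) := by
  subst hj hk; rfl

namespace Laws

variable {F : DoubleFunctor C D}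

theorem mapSqSet_hcomp (hF : F.Laws) {j : C.Ver a a'} {k : C.Ver b b'} {l : C.Ver c c'}
    (x : C.SqSet j k) (y : C.SqSet k l) :
    F.mapSqSet (x.hcomp y) = (F.mapSqSet x).hcomp (F.mapSqSet y) :=
  SqSet.ext (hF.hmap_comp _ _) (hF.hmap_comp _ _) (hF.smap_hComp _ _)

theorem mapSqSet_idH (hF : F.Laws) (j : C.Ver a c) :
    F.mapSqSet (SqSet.idH j) = SqSet.idH (F.vmap j) :=
  SqSet.ext (hF.hmap_id _) (hF.hmap_id _) (hF.smap_idSqH _)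

theorem mapSqSet_idV (hF : F.Laws) (f : C.Hor a b) :
    F.mapSqSet (SqSet.idV f) =
      (SqSet.idV (F.hmap f)).cast (hF.vmap_id a).symm (hF.vmap_id b).symm :=
  SqSet.ext rfl rfl ((hF.smap_idSqV f).trans (SqSet.heq_cast _ _ (SqSet.idV _)).symm)

theorem mapSqSet_vcomp (hF : F.Laws) {j : C.Ver a c} {k : C.Ver b b'} {j' : C.Ver c e}
    {k' : C.Ver b' e'} (x : C.SqSet j k) (y : C.SqSet j' k') (h : x.2.1 = y.1) :
    F.mapSqSet (x.vcomp y h) =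
      ((F.mapSqSet x).vcomp (F.mapSqSet y) (congrArg F.hmap h)).cast
        (hF.vmap_comp j j').symm (hF.vmap_comp k k').symm := by
  obtain ⟨f, g, α⟩ := x; obtain ⟨g', h', β⟩ := y
  obtain rfl : g = g' := h
  exact SqSet.ext rfl rfl ((hF.smap_vComp α β).trans (SqSet.heq_cast _ _
    ((F.mapSqSet ⟨f, g, α⟩).vcomp (F.mapSqSet ⟨g, h', β⟩) rfl)).symm)

end Laws

end DoubleFunctor

namespace DoubleFunctor.IsUniversalFrom

variable {C D : DoubleCat} {S : DoubleFunctor D C} {a a' : C.Obj} {r r' d d' : D.Obj}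
  {j : C.Ver a a'} {k : D.Ver r r'} {μ : C.SqSet j (S.vmap k)}

theorem eq_of_hcomp_eq (hμ : S.IsUniversalFrom μ) {l : D.Ver d d'} {x y : D.SqSet k l}
    (h : μ.hcomp (S.mapSqSet x) = μ.hcomp (S.mapSqSet y)) : x = y :=
  (hμ l).injective h

noncomputable def lift (hμ : S.IsUniversalFrom μ) (l : D.Ver d d') (y : C.SqSet j (S.vmap l)) :
    D.SqSet k l :=
  Function.surjInv (hμ l).surjective y

theorem hcomp_lift (hμ : S.IsUniversalFrom μ) (l : D.Ver d d') (y : C.SqSet j (S.vmap l)) :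
    μ.hcomp (S.mapSqSet (hμ.lift l y)) = y :=
  Function.surjInv_eq (hμ l).surjective y

end DoubleFunctor.IsUniversalFrom

namespace HorNatTrans

open DoubleCat DoubleFunctor

variable {X A : DoubleCat} {F : DoubleFunctor X A} {G : DoubleFunctor A X}
  {η : HorNatTrans (idF X) (F.comp G)} {ε : HorNatTrans (G.comp F) (idF A)}

/- `unitApp` and `counitApp` are `app` retyped with `G.obj (F.obj a)` in place of
`(F.comp G).obj a` (and so on): the two agree only after unfolding `comp`, which `rw` does not
do when matching. -/

def unitApp (η : HorNatTrans (idF X) (F.comp G)) (a : X.Obj) : X.Hor a (G.obj (F.obj a)) :=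
  η.app a

def counitApp (ε : HorNatTrans (G.comp F) (idF A)) (p : A.Obj) : A.Hor (F.obj (G.obj p)) p :=
  ε.app p

def unitSq (η : HorNatTrans (idF X) (F.comp G)) {a b : X.Obj} (j : X.Ver a b) :
    X.SqSet j (G.vmap (F.vmap j)) :=
  ⟨η.unitApp a, η.unitApp b, η.sq j⟩

def counitSq (ε : HorNatTrans (G.comp F) (idF A)) {p q : A.Obj} (k : A.Ver p q) :
    A.SqSet (F.vmap (G.vmap k)) k :=
  ⟨ε.counitApp p, ε.counitApp q, ε.sq k⟩

def IsUniversal (η : HorNatTrans (idF X) (F.comp G)) : Prop :=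
  ∀ {a b : X.Obj} (j : X.Ver a b), G.IsUniversalFrom (η.unitSq j)

def TriangleG (η : HorNatTrans (idF X) (F.comp G)) (ε : HorNatTrans (G.comp F) (idF A)) : Prop :=
  ∀ {p q : A.Obj} (k : A.Ver p q),
    (η.unitSq (G.vmap k)).hcomp (G.mapSqSet (ε.counitSq k)) = SqSet.idH (G.vmap k)

namespace Laws

theorem unitSq_naturality (hη : η.Laws) {a b c d : X.Obj} {i : X.Ver a b} {i' : X.Ver c d}
    (y : X.SqSet i i') :
    y.hcomp (η.unitSq i') = (η.unitSq i).hcomp (G.mapSqSet (F.mapSqSet y)) :=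
  SqSet.ext (hη.natural_hor _) (hη.natural_hor _) (hη.natural _)

theorem counitSq_naturality (hε : ε.Laws) {p q r s : A.Obj} {m : A.Ver p q} {m' : A.Ver r s}
    (z : A.SqSet m m') :
    (F.mapSqSet (G.mapSqSet z)).hcomp (ε.counitSq m') = (ε.counitSq m).hcomp z :=
  SqSet.ext (hε.natural_hor _) (hε.natural_hor _) (hε.natural _)

theorem unitSq_of_eq_vId (hη : η.Laws) (hF : F.Laws) (hG : G.Laws) {a : X.Obj}
    {j : X.Ver a a} (hj : j = X.vId a) :
    η.unitSq j =
      (SqSet.idV (η.unitApp a)).cast hj.symm (by rw [hj, hF.vmap_id, hG.vmap_id]) := by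
  subst hj
  exact SqSet.ext rfl rfl ((hη.sq_id a).trans (SqSet.heq_cast _ _ (SqSet.idV _)).symm)

theorem unitSq_of_eq_vComp (hη : η.Laws) (hF : F.Laws) (hG : G.Laws) {a b c : X.Obj}
    {j : X.Ver a c} {j₁ : X.Ver a b} {j₂ : X.Ver b c} (hj : j = X.vComp j₁ j₂) :
    η.unitSq j = ((η.unitSq j₁).vcomp (η.unitSq j₂) rfl).cast hj.symm
      (by rw [hj, hF.vmap_comp, hG.vmap_comp]) := by
  subst hj
  exact SqSet.ext rfl rfl ((hη.sq_comp j₁ j₂).trans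
    (SqSet.heq_cast _ _ ((η.unitSq j₁).vcomp (η.unitSq j₂) rfl)).symm)

end Laws

end HorNatTrans

namespace HorDoubleAdj

open DoubleCat DoubleFunctor

variable {X A : DoubleCat} {F : DoubleFunctor X A} {G : DoubleFunctor A X}
  (adj : HorDoubleAdj F G)

theorem triangleF_sqSet {a b : X.Obj} (j : X.Ver a b) :
    (F.mapSqSet (adj.unit.unitSq j)).hcomp (adj.counit.counitSq (F.vmap j)) =
      SqSet.idH (F.vmap j) :=
  SqSet.ext (adj.triangleF_obj a) (adj.triangleF_obj b) (adj.triangleF_sq j)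

theorem triangleG : HorNatTrans.TriangleG adj.unit adj.counit := fun k =>
  SqSet.ext (adj.triangleG_obj _) (adj.triangleG_obj _) (adj.triangleG_sq k)

theorem isUniversalFrom_unitSq (hX : X.Laws) (hA : A.Laws) {a b : X.Obj} (j : X.Ver a b) :
    G.IsUniversalFrom (adj.unit.unitSq j) := by
  intro d d' l
  refine Function.bijective_iff_has_inverse.mpr
    ⟨fun y => (F.mapSqSet y).hcomp (adj.counit.counitSq l), fun x => ?_, fun y => ?_⟩
  · change (F.mapSqSet ((adj.unit.unitSq j).hcomp (G.mapSqSet x))).hcomp _ = x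
    rw [adj.F_laws.mapSqSet_hcomp, SqSet.hcomp_assoc hA,
      adj.counit_laws.counitSq_naturality, ← SqSet.hcomp_assoc hA, adj.triangleF_sqSet,
      SqSet.idH_hcomp hA]
  · change (adj.unit.unitSq j).hcomp (G.mapSqSet ((F.mapSqSet y).hcomp _)) = y
    rw [adj.G_laws.mapSqSet_hcomp, ← SqSet.hcomp_assoc hX,
      ← adj.unit_laws.unitSq_naturality, SqSet.hcomp_assoc hX, adj.triangleG,
      SqSet.hcomp_idH hX]

end HorDoubleAdj

namespace HorNatTrans

open DoubleCat DoubleFunctor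

variable {X A : DoubleCat} {F : DoubleFunctor X A} {G : DoubleFunctor A X}
  {η : HorNatTrans (idF X) (F.comp G)} {ε : HorNatTrans (G.comp F) (idF A)}

theorem eq_of_app_hComp_hmap_eq (hX : X.Laws) (hF : F.Laws) (hG : G.Laws) (hη : η.Laws)
    (huniv : η.IsUniversal) {c : X.Obj} {d : A.Obj} {h h' : A.Hor (F.obj c) d}
    (hh : X.hComp (η.unitApp c) (G.hmap h) = X.hComp (η.unitApp c) (G.hmap h')) : h = h' := by
  have image : ∀ h : A.Hor (F.obj c) d,
      (η.unitSq (X.vId c)).hcomp (G.mapSqSet ((SqSet.idV h).cast (hF.vmap_id c).symm rfl)) =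
        (SqSet.idV (X.hComp (η.unitApp c) (G.hmap h))).cast rfl (hG.vmap_id d).symm := by
    intro h
    rw [hη.unitSq_of_eq_vId hF hG rfl, mapSqSet_cast, hG.mapSqSet_idV, SqSet.cast_cast,
      SqSet.cast_hcomp_cast, SqSet.idV_hcomp_idV hX]
  have key : (SqSet.idV h).cast (hF.vmap_id c).symm rfl = (SqSet.idV h').cast _ rfl :=
    IsUniversalFrom.eq_of_hcomp_eq (huniv (X.vId c)) (by rw [image h, image h', hh])
  exact congrArg Sigma.fst key

theorem exists_counit_triangleG (hX : X.Laws) (hF : F.Laws) (hG : G.Laws) (hη : η.Laws)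
    (huniv : η.IsUniversal) :
    ∃ ε : HorNatTrans (G.comp F) (idF A), TriangleG η ε := by
  let U {p q : A.Obj} (k : A.Ver p q) : A.SqSet (F.vmap (G.vmap k)) k :=
    IsUniversalFrom.lift (huniv (G.vmap k)) k (SqSet.idH (G.vmap k))
  have hU {p q : A.Obj} (k : A.Ver p q) :
      (η.unitSq (G.vmap k)).hcomp (G.mapSqSet (U k)) = SqSet.idH (G.vmap k) :=
    IsUniversalFrom.hcomp_lift (huniv (G.vmap k)) k _
  have top {p q : A.Obj} (k : A.Ver p q) : (U k).1 = (U (A.vId p)).1 :=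
    eq_of_app_hComp_hmap_eq hX hF hG hη huniv
      ((congrArg Sigma.fst (hU k)).trans (congrArg Sigma.fst (hU (A.vId p))).symm)
  have bottom {p q : A.Obj} (k : A.Ver p q) : (U k).2.1 = (U (A.vId q)).1 :=
    eq_of_app_hComp_hmap_eq hX hF hG hη huniv
      ((congrArg (·.2.1) (hU k)).trans (congrArg Sigma.fst (hU (A.vId q))).symm)
  refine ⟨⟨fun p => (U (A.vId p)).1, fun k => A.recast (top k) rfl rfl (bottom k) (U k).2.2⟩,
    fun k => ?_⟩
  convert hU k using 3
  exact SqSet.ext (top k).symm (bottom k).symm (recast_heq (top k) rfl rfl (bottom k) (U k).2.2)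

theorem triangleF_of_triangleG (hX : X.Laws) (hG : G.Laws) (hη : η.Laws)
    (huniv : η.IsUniversal) (hU : TriangleG η ε) {a b : X.Obj} (j : X.Ver a b) :
    (F.mapSqSet (η.unitSq j)).hcomp (ε.counitSq (F.vmap j)) = SqSet.idH (F.vmap j) := by
  refine IsUniversalFrom.eq_of_hcomp_eq (huniv j) ?_
  rw [hG.mapSqSet_hcomp, ← SqSet.hcomp_assoc hX, ← hη.unitSq_naturality, SqSet.hcomp_assoc hX,
    hU, SqSet.hcomp_idH hX, hG.mapSqSet_idH, SqSet.hcomp_idH hX]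

theorem counitSq_naturality_of_triangleG (hX : X.Laws) (hG : G.Laws) (hη : η.Laws)
    (huniv : η.IsUniversal) (hU : TriangleG η ε)
    {p q r s : A.Obj} {m : A.Ver p q} {m' : A.Ver r s} (z : A.SqSet m m') :
    (F.mapSqSet (G.mapSqSet z)).hcomp (ε.counitSq m') = (ε.counitSq m).hcomp z := by
  refine IsUniversalFrom.eq_of_hcomp_eq (huniv (G.vmap m)) ?_
  rw [hG.mapSqSet_hcomp, hG.mapSqSet_hcomp, ← SqSet.hcomp_assoc hX, ← SqSet.hcomp_assoc hX,
    ← hη.unitSq_naturality, SqSet.hcomp_assoc hX, hU, SqSet.hcomp_idH hX, hU, SqSet.idH_hcomp hX]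

theorem counitSq_vId_of_triangleG (hX : X.Laws) (hF : F.Laws) (hG : G.Laws) (hη : η.Laws)
    (huniv : η.IsUniversal) (hU : TriangleG η ε) (p : A.Obj) :
    ε.counitSq (A.vId p) =
      (SqSet.idV (ε.counitApp p)).cast (by rw [hG.vmap_id, hF.vmap_id]) rfl := by
  have triangle : X.hComp (η.unitApp (G.obj p)) (G.hmap (ε.counitApp p)) = X.hId (G.obj p) :=
    congrArg Sigma.fst (hU (A.vId p))
  refine IsUniversalFrom.eq_of_hcomp_eq (huniv (G.vmap (A.vId p))) ?_
  rw [hU, hη.unitSq_of_eq_vId hF hG (hG.vmap_id p), mapSqSet_cast, hG.mapSqSet_idV,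
    SqSet.cast_cast, SqSet.cast_hcomp_cast, SqSet.idV_hcomp_idV hX, triangle,
    ← SqSet.idH_vId hX, SqSet.idH_cast]

theorem counitSq_vComp_of_triangleG (hX : X.Laws) (hF : F.Laws) (hG : G.Laws) (hη : η.Laws)
    (huniv : η.IsUniversal) (hU : TriangleG η ε)
    {p q r : A.Obj} (k : A.Ver p q) (k' : A.Ver q r) :
    ε.counitSq (A.vComp k k') = ((ε.counitSq k).vcomp (ε.counitSq k') rfl).cast
      (by rw [hG.vmap_comp, hF.vmap_comp]) rfl := by
  refine IsUniversalFrom.eq_of_hcomp_eq (huniv (G.vmap (A.vComp k k'))) ?_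
  rw [hU, hη.unitSq_of_eq_vComp hF hG (hG.vmap_comp k k'), mapSqSet_cast,
    hG.mapSqSet_vcomp (ε.counitSq k) (ε.counitSq k') rfl,
    SqSet.cast_cast, SqSet.cast_hcomp_cast, SqSet.vcomp_hcomp_vcomp hX _ _ _ _ rfl rfl,
    SqSet.vcomp_congr (hU k) (hU k') rfl, SqSet.idH_vcomp_idH hX, SqSet.idH_cast]

theorem laws_of_triangleG (hX : X.Laws) (hF : F.Laws) (hG : G.Laws) (hη : η.Laws)
    (huniv : η.IsUniversal) (hU : TriangleG η ε) : ε.Laws where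
  sq_id p := (SqSet.snd_snd_heq (counitSq_vId_of_triangleG hX hF hG hη huniv hU p)).trans
    (SqSet.heq_cast _ _ (SqSet.idV _))
  sq_comp k k' :=
    (SqSet.snd_snd_heq (counitSq_vComp_of_triangleG hX hF hG hη huniv hU k k')).trans
      (SqSet.heq_cast _ _ ((ε.counitSq k).vcomp (ε.counitSq k') rfl))
  natural_hor g :=
    congrArg Sigma.fst (counitSq_naturality_of_triangleG hX hG hη huniv hU (SqSet.idV g))
  natural α := SqSet.snd_snd_heq (counitSq_naturality_of_triangleG hX hG hη huniv hU ⟨_, _, α⟩)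

theorem nonempty_horDoubleAdj (hX : X.Laws) (hF : F.Laws) (hG : G.Laws) (hη : η.Laws)
    (huniv : η.IsUniversal) : Nonempty (HorDoubleAdj F G) := by
  obtain ⟨ε, hU⟩ := exists_counit_triangleG hX hF hG hη huniv
  have triangleF {a b : X.Obj} (j : X.Ver a b) := triangleF_of_triangleG hX hG hη huniv hU j
  exact ⟨{ F_laws := hF, G_laws := hG, unit := η, counit := ε, unit_laws := hη
           counit_laws := laws_of_triangleG hX hF hG hη huniv hU
           triangleF_obj := fun a => congrArg Sigma.fst (triangleF (X.vId a))
           triangleF_sq := fun j => SqSet.snd_snd_heq (triangleF j)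
           triangleG_obj := fun p => congrArg Sigma.fst (hU (A.vId p))
           triangleG_sq := fun k => SqSet.snd_snd_heq (hU k) }⟩

end HorNatTrans

/-- For double functors `F : X → A` and `G : A → X`, a
horizontal double adjunction `F ⊣ G` exists if and only if there exists a
horizontal natural transformation `η : 1_X ⇒ GF` such that for every vertical
morphism `j` of `X` the square `η_j` is horizontally universal from `j` to
`G`. -/
theorem double_adjunction_iff_unit_universal
    {X A : DoubleCat} (hX : X.Laws) (hA : A.Laws)
    (F : DoubleFunctor X A) (G : DoubleFunctor A X)
    (hF : F.Laws) (hG : G.Laws) :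
    Nonempty (HorDoubleAdj F G) ↔
      ∃ η : HorNatTrans (DoubleFunctor.idF X) (F.comp G), η.Laws ∧
        ∀ {a b : X.Obj} (j : X.Ver a b),
          G.IsUniversalFrom (j := j) (k := F.vmap j)
            ⟨η.app a, η.app b, η.sq j⟩ := by
  constructor
  · rintro ⟨adj⟩
    exact ⟨adj.unit, adj.unit_laws, adj.isUniversalFrom_unitSq hX hA⟩
  · rintro ⟨η, hη, huniv⟩
    exact HorNatTrans.nonempty_horDoubleAdj hX hF hG hη huniv
end
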